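/- Let 𝔽 be an arbitrary field and for each 1 ≤ i ≤ n let ≺_i be an elimination order with respect to the variable x_i on the monomials of 𝔽[x_1,…,x_n]. Then for any zero dimensional ideal I ⊴ 𝔽[x_1,…,x_n], the set of standard monomials Sm(I) is the same for every term order if and only if it is the same for the n term orders ≺_1,…,≺_n. -/

import Mathlib

open MvPolynomial

/-- Monomials of `𝔽[x_1,…,x_n]` identified with their exponent vectors. -/
abbrev Mon (n : ℕ) := Fin n →₀ ℕ

/-- A linear order on monomials is a term order if `1` (i.e. the zero exponent
vector) is minimal and the order is compatible with multiplication by monomials. -/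
def IsTermOrder {n : ℕ} (lin : LinearOrder (Mon n)) : Prop :=
  (∀ u : Mon n, lin.le 0 u) ∧
    ∀ u v w : Mon n, lin.le u v → lin.le (u + w) (v + w)

/-- The strict lexicographic comparison of exponent vectors induced by the variable
ordering `x_{σ 0} ≻ x_{σ 1} ≻ ⋯ ≻ x_{σ (n-1)}`. -/
def lexLt {n : ℕ} (σ : Equiv.Perm (Fin n)) (u v : Mon n) : Prop :=
  ∃ j : Fin n, u (σ j) < v (σ j) ∧ ∀ i : Fin n, i < j → u (σ i) = v (σ i)

/-- `lin` is the lexicographic term order induced by the variable ordering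
`x_{σ 0} ≻ x_{σ 1} ≻ ⋯ ≻ x_{σ (n-1)}`. -/
def IsLexOrder {n : ℕ} (σ : Equiv.Perm (Fin n)) (lin : LinearOrder (Mon n)) : Prop :=
  ∀ u v : Mon n, lin.lt u v ↔ lexLt σ u v

/-- `m` is the leading monomial of `f` with respect to the monomial order `lin`. -/
def IsLeadMon {n : ℕ} {F : Type*} [CommSemiring F] (lin : LinearOrder (Mon n))
    (f : MvPolynomial (Fin n) F) (m : Mon n) : Prop :=
  m ∈ f.support ∧ ∀ m' ∈ f.support, lin.le m' m

/-- The set of standard monomials of an ideal `I` with respect to the monomial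
order `lin`: monomials that are not the leading monomial of any nonzero `f ∈ I`. -/
def stdMon {n : ℕ} {F : Type*} [CommSemiring F] (lin : LinearOrder (Mon n))
    (I : Ideal (MvPolynomial (Fin n) F)) : Set (Mon n) :=
  { m | ¬ ∃ f ∈ I, f ≠ 0 ∧ IsLeadMon lin f m }

/-- The vanishing ideal of a point set `V ⊆ F^n`. -/
def vanishIdeal {n : ℕ} {F : Type*} [CommRing F] (V : Set (Fin n → F)) :
    Ideal (MvPolynomial (Fin n) F) where
  carrier := { f | ∀ v ∈ V, MvPolynomial.eval v f = 0 }
  add_mem' := by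
    intro a b ha hb v hv
    simp [map_add, ha v hv, hb v hv]
  zero_mem' := by intro v hv; simp
  smul_mem' := by
    intro c f hf v hv
    simp [smul_eq_mul, hf v hv]

/-- A finite point set (in `{0,…,k-1}^n`, over any field) is extremal if its vanishing
ideal has the same standard monomials for every lexicographic term order. -/
def IsExtremal {n : ℕ} {F : Type*} [CommRing F] (V : Set (Fin n → F)) : Prop :=
  ∀ (σ₁ σ₂ : Equiv.Perm (Fin n)) (lin₁ lin₂ : LinearOrder (Mon n)),
    IsLexOrder σ₁ lin₁ → IsLexOrder σ₂ lin₂ →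
      stdMon lin₁ (vanishIdeal V) = stdMon lin₂ (vanishIdeal V)

/-- Embedding of a point of `{0,…,k-1}^n` into `F^n`. -/
def toField {n k : ℕ} (F : Type*) [Field F] (w : Fin n → Fin k) : Fin n → F :=
  fun i => ((w i : ℕ) : F)

/-- Identification of a point of `{0,…,k-1}^n` with an exponent vector in `ℕ^n`. -/
noncomputable def toExp {n k : ℕ} (w : Fin n → Fin k) : Mon n :=
  Finsupp.equivFunOnFinite.symm fun i => (w i : ℕ)

/-- The downshift `D_i(V)` of `V ⊆ {0,…,k-1}^n` at coordinate `i`: its `i`-section at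
each choice of the other coordinates is `{0,1,…,m-1}` where `m` is the size of the
corresponding `i`-section of `V`. -/
def downshift {n k : ℕ} (V : Finset (Fin n → Fin k)) (i : Fin n) :
    Finset (Fin n → Fin k) :=
  Finset.univ.filter fun w =>
    (w i : ℕ) < (Finset.univ.filter fun α : Fin k => Function.update w i α ∈ V).card

/-- The iterated downshift `D_{σ(n-1)}(D_{σ(n-2)}(⋯(D_{σ 0}(V))))`,
i.e. downshifts are applied at coordinates `σ 0, σ 1, …, σ (n-1)` in this order. -/
def iterDownshift {n k : ℕ} (σ : Equiv.Perm (Fin n)) (V : Finset (Fin n → Fin k)) :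
    Finset (Fin n → Fin k) :=
  (List.ofFn fun j : Fin n => σ j).foldl downshift V

/-- A polynomial is degree dominated (with dominating term `x^w`) if it equals
`x^w + Σ αᵢ x^{vᵢ}` where each `x^{vᵢ}` divides `x^w`. -/
def IsDegDominated {n : ℕ} {F : Type*} [CommSemiring F]
    (f : MvPolynomial (Fin n) F) : Prop :=
  ∃ w : Mon n, MvPolynomial.coeff w f = 1 ∧ ∀ v ∈ f.support, v ≤ w

/-- `G` is a Gröbner basis of `I` with respect to the monomial order `lin`:
`G ⊆ I` and for every nonzero `f ∈ I` some `g ∈ G` has leading monomial dividing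
the leading monomial of `f` (divisibility of monomials being `≤` of exponents). -/
def IsGroebner {n : ℕ} {F : Type*} [CommSemiring F] (lin : LinearOrder (Mon n))
    (G : Finset (MvPolynomial (Fin n) F)) (I : Ideal (MvPolynomial (Fin n) F)) : Prop :=
  (∀ g ∈ G, g ∈ I) ∧
    ∀ f ∈ I, f ≠ 0 → ∀ m : Mon n, IsLeadMon lin f m →
      ∃ g ∈ G, ∃ mg : Mon n, IsLeadMon lin g mg ∧ mg ≤ m

/-- `G` is a universal Gröbner basis of `I` if it is a Gröbner basis for every term order. -/
def IsUnivGroebner {n : ℕ} {F : Type*} [CommSemiring F]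
    (G : Finset (MvPolynomial (Fin n) F)) (I : Ideal (MvPolynomial (Fin n) F)) : Prop :=
  ∀ lin : LinearOrder (Mon n), IsTermOrder lin → IsGroebner lin G I

/-- A term order is an elimination order with respect to `x_i` if `x_i` is greater
than every monomial not involving `x_i`. -/
def IsElimOrder {n : ℕ} (lin : LinearOrder (Mon n)) (i : Fin n) : Prop :=
  IsTermOrder lin ∧ ∀ m : Mon n, m i = 0 → lin.lt m (Finsupp.single i 1)

/-- A set system `𝓕` shatters `S` if every subset of `S` is the intersection of `S`
with a member of `𝓕`. -/
def Shatters {n : ℕ} (𝓕 : Finset (Finset (Fin n))) (S : Finset (Fin n)) : Prop :=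
  ∀ T ⊆ S, ∃ Fm ∈ 𝓕, Fm ∩ S = T

open scoped Classical in
/-- The family `Sh(𝓕)` of sets shattered by `𝓕`. -/
noncomputable def shatteredFamily {n : ℕ} (𝓕 : Finset (Finset (Fin n))) :
    Finset (Finset (Fin n)) :=
  Finset.univ.filter fun S => Shatters 𝓕 S

/-- A set system is shattering-extremal if it shatters exactly `|𝓕|` sets. -/
def IsSExtremal {n : ℕ} (𝓕 : Finset (Finset (Fin n))) : Prop :=
  (shatteredFamily 𝓕).card = 𝓕.card

/-- The characteristic vector of a set, as a point of `F^n`. -/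
def charVec {n : ℕ} (F : Type*) [Field F] (Fm : Finset (Fin n)) : Fin n → F :=
  fun i => if i ∈ Fm then 1 else 0

/-- The squarefree monomial `∏_{i ∈ S} x_i` associated to a set `S ⊆ [n]`,
as an exponent vector. -/
noncomputable def setMon {n : ℕ} (S : Finset (Fin n)) : Mon n :=
  Finsupp.equivFunOnFinite.symm fun i => if i ∈ S then 1 else 0

/-- The polynomial `f_{S,H} = (∏_{i∈H} x_i) ⬝ ∏_{i∈S∖H} (x_i - 1)`. -/
noncomputable def fSH {n : ℕ} (F : Type*) [Field F] (S H : Finset (Fin n)) :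
    MvPolynomial (Fin n) F :=
  (∏ i ∈ H, X i) * ∏ i ∈ S \ H, (X i - 1)

/-- The downshift `D_i(𝓕)` of a set system. -/
def dshiftSet {n : ℕ} (𝓕 : Finset (Finset (Fin n))) (i : Fin n) :
    Finset (Finset (Fin n)) :=
  𝓕.image (fun Fm => Fm.erase i) ∪ 𝓕.filter fun Fm => i ∈ Fm ∧ Fm.erase i ∈ 𝓕

/-- The iterated downshift `D_{σ(n-1)}(⋯(D_{σ 0}(𝓕)))` of a set system:
downshifts are applied at `σ 0, σ 1, …, σ (n-1)` in this order. -/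
def iterDshiftSet {n : ℕ} (σ : Equiv.Perm (Fin n)) (𝓕 : Finset (Finset (Fin n))) :
    Finset (Finset (Fin n)) :=
  (List.ofFn fun j : Fin n => σ j).foldl dshiftSet 𝓕

/-- Restriction of an exponent vector in `ℕ^{n+1}` to its first `n` coordinates. -/
noncomputable def restrictMon {n : ℕ} (w : Mon (n + 1)) : Mon n :=
  Finsupp.equivFunOnFinite.symm fun i => w i.castSucc

/-!
Suppose the elimination orders `≺ᵢ` share the standard monomials `S`. For `w ∉ S`, let `g` be the
normal form of `x^w` modulo `I`; it is supported on `S`, so it is the same for every `≺ᵢ`, and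
`x^w` is the leading monomial of `x^w - g ∈ I` for every `≺ᵢ`. As `≺ᵢ` eliminates `xᵢ`, no
monomial of `g` has larger `xᵢ`-degree than `x^w`; thus every monomial of `g` divides `x^w`, and
`x^w` is the leading monomial of `x^w - g` for every term order `≺`. Hence `Sm_≺(I) ⊆ S`; and for
`s ∈ S \ Sm_≺(I)`, reducing `x^s` modulo `I` with respect to `≺` would give a nonzero element of
`I` supported on `S`, which is impossible.
-/

/-- `Mon n` ordered by `lin`, kept apart from the pointwise (divisibility) order on `Mon n`. -/
def OrderedMon {n : ℕ} (_ : LinearOrder (Mon n)) : Type := Mon n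

namespace OrderedMon

variable {n : ℕ} (lin : LinearOrder (Mon n))

noncomputable instance : AddCommMonoid (OrderedMon lin) := inferInstanceAs (AddCommMonoid (Mon n))

instance : LinearOrder (OrderedMon lin) := lin

end OrderedMon

section LeadMon

variable {n : ℕ} {R : Type*} [CommSemiring R] {lin : LinearOrder (Mon n)}
  {f : MvPolynomial (Fin n) R} {I : Ideal (MvPolynomial (Fin n) R)}

theorem IsLeadMon.ne_zero {m : Mon n} (hm : IsLeadMon lin f m) : f ≠ 0 :=
  support_nonempty.1 ⟨m, hm.1⟩

theorem exists_isLeadMon (lin : LinearOrder (Mon n)) (hf : f ≠ 0) : ∃ m, IsLeadMon lin f m :=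
  letI := lin
  ⟨f.support.max' (support_nonempty.2 hf), f.support.max'_mem _, fun _ => f.support.le_max' _⟩

theorem eq_zero_of_support_subset_stdMon (hfI : f ∈ I) (hf : ↑f.support ⊆ stdMon lin I) :
    f = 0 := by
  by_contra hf0
  obtain ⟨m, hm⟩ := exists_isLeadMon lin hf0
  exact hf hm.1 ⟨f, hfI, hf0, hm⟩

theorem isLeadMon_of_support_subset_stdMon {w : Mon n} (hfI : f ∈ I) (hw : w ∈ f.support)
    (hf : ∀ v ∈ f.support, v ≠ w → v ∈ stdMon lin I) : IsLeadMon lin f w := by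
  have hf0 : f ≠ 0 := support_nonempty.1 ⟨w, hw⟩
  obtain ⟨m, hm⟩ := exists_isLeadMon lin hf0
  obtain rfl : m = w := by_contra fun hmw => hf m hm.1 hmw ⟨f, hfI, hf0, hm⟩
  exact hm

end LeadMon

namespace IsTermOrder

variable {n : ℕ} {lin : LinearOrder (Mon n)}

theorem le_of_le (h : IsTermOrder lin) {u v : Mon n} (huv : u ≤ v) : lin.le u v := by
  simpa [add_tsub_cancel_of_le huv, add_comm] using h.2 0 (v - u) u (h.1 (v - u))

/-- Well-foundedness comes from Dickson's lemma, through `le_of_le`. -/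
noncomputable def toMonomialOrder (h : IsTermOrder lin) : MonomialOrder (Fin n) where
  syn := OrderedMon lin
  isOrderedAddMonoid_syn := { add_le_add_left := fun u v huv w => h.2 u v w huv }
  toSyn := AddEquiv.refl _
  toSyn_monotone _ _ := h.le_of_le
  wellFoundedLT_syn :=
    have : WellQuasiOrderedLE (OrderedMon lin) :=
      Monotone.wellQuasiOrderedLE_of_wellQuasiOrderedLE_of_surjective
        (f := (id : Mon n → OrderedMon lin)) (fun _ _ => h.le_of_le) Function.surjective_id
    inferInstance

theorem degree_eq_of_isLeadMon {R : Type*} [CommSemiring R] (h : IsTermOrder lin)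
    {f : MvPolynomial (Fin n) R} {m : Mon n} (hm : IsLeadMon lin f m) :
    h.toMonomialOrder.degree f = m :=
  lin.le_antisymm _ _ (hm.2 _ (h.toMonomialOrder.degree_mem_support hm.ne_zero))
    (h.toMonomialOrder.le_degree hm.1)

theorem exists_sub_mem_support_subset_stdMon {F : Type*} [Field F] (h : IsTermOrder lin)
    (I : Ideal (MvPolynomial (Fin n) F)) (p : MvPolynomial (Fin n) F) :
    ∃ r, p - r ∈ I ∧ ↑r.support ⊆ stdMon lin I := by
  obtain ⟨g, r, hpr, -, hr⟩ := h.toMonomialOrder.div_set (B := {b | b ∈ I ∧ b ≠ 0})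
    (fun b hb => (MonomialOrder.leadingCoeff_ne_zero_iff.2 hb.2).isUnit) p
  refine ⟨r, ?_, fun c hc ⟨f, hfI, hf0, hf⟩ =>
    hr c hc f ⟨hfI, hf0⟩ (h.degree_eq_of_isLeadMon hf).le⟩
  rw [sub_eq_of_eq_add hpr, Finsupp.linearCombination_apply]
  exact Submodule.finsuppSum_mem _ _ _ _ fun b _ => I.smul_mem _ b.2.1

end IsTermOrder

/-- `x^u = xᵢ^{uᵢ} · m` with `m ≺ xᵢ`, so `x^u ≺ xᵢ^{uᵢ + 1}`, which divides `x^v`. -/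
theorem IsElimOrder.lt_of_apply_lt {n : ℕ} {lin : LinearOrder (Mon n)} {i : Fin n}
    (h : IsElimOrder lin i) {u v : Mon n} (huv : u i < v i) : lin.lt u v := by
  let m := h.1.toMonomialOrder
  change m.toSyn u < m.toSyn v
  have hx : m.toSyn (u.erase i) < m.toSyn (Finsupp.single i 1) := h.2 _ Finsupp.erase_same
  calc m.toSyn u = m.toSyn (u.erase i) + m.toSyn (Finsupp.single i (u i)) := by
        rw [← map_add, Finsupp.erase_add_single]
    _ < m.toSyn (Finsupp.single i 1) + m.toSyn (Finsupp.single i (u i)) := by gcongr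
    _ = m.toSyn (Finsupp.single i (u i + 1)) := by
        rw [← map_add, ← Finsupp.single_add, add_comm 1]
    _ ≤ m.toSyn v := m.toSyn_monotone (Finsupp.single_le_iff.2 huv)

/-- The paper's degree dominated polynomials, with the dominating term `x^w` made explicit. -/
def HasDominatingTerm {n : ℕ} {R : Type*} [CommSemiring R] (f : MvPolynomial (Fin n) R)
    (w : Mon n) : Prop :=
  coeff w f = 1 ∧ ∀ v ∈ f.support, v ≤ w

theorem HasDominatingTerm.isLeadMon {n : ℕ} {R : Type*} [CommSemiring R] [Nontrivial R]
    {lin : LinearOrder (Mon n)} {f : MvPolynomial (Fin n) R} {w : Mon n}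
    (hf : HasDominatingTerm f w) (h : IsTermOrder lin) : IsLeadMon lin f w :=
  ⟨mem_support_iff.2 (by simp [hf.1]), fun v hv => h.le_of_le (hf.2 v hv)⟩

section StdMon

variable {n : ℕ} {F : Type*} [Field F] {I : Ideal (MvPolynomial (Fin n) F)}

theorem stdMon_eq_of_subset {lin₁ lin₂ : LinearOrder (Mon n)} (h₁ : IsTermOrder lin₁)
    (hsub : stdMon lin₁ I ⊆ stdMon lin₂ I) : stdMon lin₁ I = stdMon lin₂ I := by
  refine hsub.antisymm fun s hs => by_contra fun hs₁ => ?_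
  obtain ⟨r, hrI, hr⟩ := h₁.exists_sub_mem_support_subset_stdMon I (monomial s 1)
  have hsr : coeff s r = 0 := notMem_support_iff.1 fun h => hs₁ (hr h)
  have hzero : monomial s (1 : F) - r = 0 := by
    refine eq_zero_of_support_subset_stdMon (lin := lin₂) hrI fun v hv => ?_
    rcases Finset.mem_union.1 (support_sub _ _ _ hv) with hv | hv
    · rwa [Finset.mem_singleton.1 (support_monomial_subset hv)]
    · exact hsub (hr hv)
  simpa [hsr] using congr_arg (coeff s) hzero

theorem stdMon_subset_of_forall_hasDominatingTerm {lin : LinearOrder (Mon n)}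
    (h : IsTermOrder lin) {S : Set (Mon n)} (hS : ∀ w ∉ S, ∃ f ∈ I, HasDominatingTerm f w) :
    stdMon lin I ⊆ S := fun w hw => by_contra fun hwS => by
  obtain ⟨f, hfI, hf⟩ := hS w hwS
  exact hw ⟨f, hfI, (hf.isLeadMon h).ne_zero, hf.isLeadMon h⟩

theorem exists_hasDominatingTerm_of_stdMon_eq {lin₀ : LinearOrder (Mon n)}
    (h₀ : IsTermOrder lin₀) {lin : Fin n → LinearOrder (Mon n)}
    (hlin : ∀ i, IsElimOrder (lin i) i) (hS : ∀ i, stdMon (lin i) I = stdMon lin₀ I)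
    {w : Mon n} (hw : w ∉ stdMon lin₀ I) : ∃ f ∈ I, HasDominatingTerm f w := by
  obtain ⟨r, hrI, hr⟩ := h₀.exists_sub_mem_support_subset_stdMon I (monomial w 1)
  have hwr : coeff w r = 0 := notMem_support_iff.1 fun h => hw (hr h)
  have hcoeff : coeff w (monomial w (1 : F) - r) = 1 := by simp [hwr]
  refine ⟨_, hrI, hcoeff, fun v hv i => not_lt.1 fun hwv => ?_⟩
  have hstd : ∀ v ∈ (monomial w (1 : F) - r).support, v ≠ w → v ∈ stdMon (lin i) I := by
    intro v hv hvw
    rcases Finset.mem_union.1 (support_sub _ _ _ hv) with hv | hv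
    · exact absurd (Finset.mem_singleton.1 (support_monomial_subset hv)) hvw
    · exact hS i ▸ hr hv
  have hlead := isLeadMon_of_support_subset_stdMon hrI (mem_support_iff.2 (by simp [hcoeff])) hstd
  exact (((lin i).lt_iff_le_not_ge _ _).1 ((hlin i).lt_of_apply_lt hwv)).2 (hlead.2 v hv)

theorem stdMon_eq_of_forall_isElimOrder {lin₀ : LinearOrder (Mon n)} (h₀ : IsTermOrder lin₀)
    {lin : Fin n → LinearOrder (Mon n)} (hlin : ∀ i, IsElimOrder (lin i) i)
    (hS : ∀ i, stdMon (lin i) I = stdMon lin₀ I) {lin₁ : LinearOrder (Mon n)}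
    (h₁ : IsTermOrder lin₁) : stdMon lin₁ I = stdMon lin₀ I :=
  stdMon_eq_of_subset h₁ <| stdMon_subset_of_forall_hasDominatingTerm h₁ fun _ hw =>
    exists_hasDominatingTerm_of_stdMon_eq h₀ hlin hS hw

end StdMon

theorem zeroDim_stdMon_allOrders_iff_eliminationOrders_general {n : ℕ} {F : Type*} [Field F]
    (lin : Fin n → LinearOrder (Mon n)) (hlin : ∀ i : Fin n, IsElimOrder (lin i) i)
    (I : Ideal (MvPolynomial (Fin n) F)) :
    (∀ lin₁ lin₂ : LinearOrder (Mon n), IsTermOrder lin₁ → IsTermOrder lin₂ →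
        stdMon lin₁ I = stdMon lin₂ I) ↔
      ∀ i j : Fin n, stdMon (lin i) I = stdMon (lin j) I := by
  refine ⟨fun H i j => H _ _ (hlin i).1 (hlin j).1, fun H lin₁ lin₂ h₁ h₂ => ?_⟩
  rcases isEmpty_or_nonempty (Fin n) with _ | ⟨⟨i₀⟩⟩
  · exact stdMon_eq_of_forall_isElimOrder h₂ hlin isEmptyElim h₁
  · have hS i : stdMon (lin i) I = stdMon (lin i₀) I := H i i₀
    rw [stdMon_eq_of_forall_isElimOrder (hlin i₀).1 hlin hS h₁,
      stdMon_eq_of_forall_isElimOrder (hlin i₀).1 hlin hS h₂]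

/-- Theorem `LZDgen`.
Over an arbitrary field `𝔽`, for elimination orders `≺ᵢ` with respect to `xᵢ`
(`1 ≤ i ≤ n`), the standard monomials of a zero dimensional ideal
`I ⊴ 𝔽[x₁,…,xₙ]` are the same for every term order if and only if they are the same
for `≺₁,…,≺ₙ`. -/
theorem zeroDim_stdMon_allOrders_iff_eliminationOrders {n : ℕ} {F : Type*} [Field F]
    (lin : Fin n → LinearOrder (Mon n)) (hlin : ∀ i : Fin n, IsElimOrder (lin i) i)
    (I : Ideal (MvPolynomial (Fin n) F))
    (hI : FiniteDimensional F (MvPolynomial (Fin n) F ⧸ I)) :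
    (∀ lin₁ lin₂ : LinearOrder (Mon n), IsTermOrder lin₁ → IsTermOrder lin₂ →
        stdMon lin₁ I = stdMon lin₂ I) ↔
      ∀ i j : Fin n, stdMon (lin i) I = stdMon (lin j) I :=
  zeroDim_stdMon_allOrders_iff_eliminationOrders_general lin hlin I
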